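/- arXiv:1909.06806 — 3 statements merged into one kernel-verified Lean document; each statement's English description precedes it below -/
import Mathlib

section
/- Let M > 0 and let f₁ : ℝ → ℝ be a continuous nonnegative function vanishing outside [0, M]. Let h and ρ be continuously differentiable functions on [0, M] with h strictly increasing, and suppose there exists x_β ∈ (0, M) with h(x_β) = 0 and h'(x_β) > 0 (so x_β is the unique zero of h in [0, M]). Let F_Z : [0, ∞) → ℝ be continuously differentiable, nondecreasing, with derivative f_Z and F_Z(0) = c. For t ∈ ℝ define U(t) = ∫₀^M (x − h(x) − t·ρ(x)) · F_Z(h(x) + t·ρ(x)) · 1{h(x) + t·ρ(x) > 0} · f₁(x) dx. Then U is differentiable at t = 0 and U'(0) = ∫_{x_β}^M ρ(x)·[(x − h(x))·f_Z(h(x)) − F_Z(h(x))]·f₁(x) dx + (ρ(x_β)/h'(x_β)) · c · f₁(x_β) · x_β. -/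
/-!
Extending `F_Z` linearly below `0` makes the integrand
`g t x = (x - h x - t ρ x) F_Z(h x + t ρ x) f₁ x` jointly continuous and `C¹` in `t`, without
changing it where `h x + t ρ x > 0`. Near `x_β` the perturbed bid `h + t ρ` has slope close to
`h'(x_β) > 0`, and away from `x_β` it keeps the sign of `h` for small `t`; so for small `t` the
indicator cuts `[0, M]` at a single root `χ t`, and linearising `h` at `x_β` in
`h (χ t) + t ρ (χ t) = 0` gives `χ'(0) = -ρ(x_β)/h'(x_β)`. Hence `U t = ∫_{χ t}^M g t`, and the
Leibniz rule with a moving lower limit yields the interior term plus the boundary term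
`-χ'(0) g(0, x_β) = (ρ(x_β)/h'(x_β)) c f₁(x_β) x_β`.
-/
open MeasureTheory intervalIntegral Set Filter Topology Asymptotics Function
open scoped Interval

noncomputable def extendLinearBelowZero (F f : ℝ → ℝ) (y : ℝ) : ℝ :=
  if 0 ≤ y then F y else F 0 + f 0 * y

lemma hasDerivAt_extendLinearBelowZero {F f : ℝ → ℝ}
    (hF : ∀ y ∈ Ici (0 : ℝ), HasDerivWithinAt F (f y) (Ici 0) y) (y : ℝ) :
    HasDerivAt (extendLinearBelowZero F f) (f (max y 0)) y := by
  have hlin : ∀ y, HasDerivAt (fun y => F 0 + f 0 * y) (f 0) y := fun y => by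
    simpa using ((hasDerivAt_id y).const_mul (f 0)).const_add (F 0)
  rcases lt_trichotomy y 0 with hy | rfl | hy
  · rw [max_eq_right hy.le]
    refine (hlin y).congr_of_eventuallyEq ?_
    filter_upwards [Iio_mem_nhds hy] with z hz
    simp [extendLinearBelowZero, not_le.2 (mem_Iio.1 hz)]
  · have hright : HasDerivWithinAt (extendLinearBelowZero F f) (f 0) (Ici 0) 0 :=
      (hF 0 self_mem_Ici).congr (fun z hz => if_pos hz) (if_pos le_rfl)
    have hleft : HasDerivWithinAt (extendLinearBelowZero F f) (f 0) (Iic 0) 0 := by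
      refine (hlin 0).hasDerivWithinAt.congr (fun z hz => ?_) (by simp [extendLinearBelowZero])
      rcases (mem_Iic.1 hz).eq_or_lt with rfl | hz
      · simp [extendLinearBelowZero]
      · simp [extendLinearBelowZero, not_le.2 hz]
    simpa [Iic_union_Ici] using hleft.union hright
  · rw [max_eq_left hy.le]
    refine ((hF y hy.le).hasDerivAt (Ici_mem_nhds hy)).congr_of_eventuallyEq ?_
    filter_upwards [Ioi_mem_nhds hy] with z hz
    exact if_pos (le_of_lt hz)

lemma eventually_forall_pos_add_mul {K : Set ℝ} {f g : ℝ → ℝ} {m B : ℝ} (hm : 0 < m)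
    (hf : ∀ x ∈ K, m ≤ f x) (hg : ∀ x ∈ K, ‖g x‖ ≤ B) :
    ∀ᶠ t in 𝓝 (0 : ℝ), ∀ x ∈ K, 0 < f x + t * g x := by
  have hsmall : ∀ᶠ t in 𝓝 (0 : ℝ), |t| * B < m :=
    ((continuous_abs.mul continuous_const).tendsto' (0 : ℝ) 0 (by simp)).eventually_lt_const hm
  filter_upwards [hsmall] with t ht x hx
  have hbound : |t * g x| ≤ |t| * B := by
    rw [abs_mul]; exact mul_le_mul_of_nonneg_left (hg x hx) (abs_nonneg t)
  linarith [hf x hx, neg_abs_le (t * g x)]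

lemma exists_zero_setOf_pos_eq_Ioc {ψ : ℝ → ℝ} {a b x₁ x₂ : ℝ}
    (ha : a ≤ x₁) (h₁₂ : x₁ ≤ x₂) (hb : x₂ ≤ b)
    (hcont : ContinuousOn ψ (Icc x₁ x₂)) (hmono : StrictMonoOn ψ (Icc x₁ x₂))
    (hneg : ∀ x ∈ Icc a x₁, ψ x < 0) (hpos : ∀ x ∈ Icc x₂ b, 0 < ψ x) :
    ∃ z ∈ Ioo x₁ x₂, ψ z = 0 ∧ {x ∈ Icc a b | 0 < ψ x} = Ioc z b := by
  obtain ⟨z, hz, hz0⟩ : (0 : ℝ) ∈ ψ '' Ioo x₁ x₂ :=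
    intermediate_value_Ioo h₁₂ hcont ⟨hneg x₁ ⟨ha, le_rfl⟩, hpos x₂ ⟨le_rfl, hb⟩⟩
  have hzI : z ∈ Icc x₁ x₂ := Ioo_subset_Icc_self hz
  refine ⟨z, hz, hz0, Set.ext fun x => ⟨fun ⟨⟨hax, hxb⟩, hx⟩ => ⟨?_, hxb⟩, fun ⟨hzx, hxb⟩ => ?_⟩⟩
  · by_contra! hxz
    rcases le_or_gt x x₁ with hx₁ | hx₁
    · linarith [hneg x ⟨hax, hx₁⟩]
    · linarith [hmono.monotoneOn ⟨hx₁.le, hxz.trans hz.2.le⟩ hzI hxz]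
  · refine ⟨⟨by linarith [hz.1], hxb⟩, ?_⟩
    rcases le_or_gt x₂ x with hx₂ | hx₂
    · exact hpos x ⟨hx₂, hxb⟩
    · exact hz0 ▸ hmono hzI ⟨hz.1.le.trans hzx.le, hx₂.le⟩ hzx

lemma eventually_strictMonoOn_add_mul {h ρ h' ρ' : ℝ → ℝ} {s : Set ℝ} {m B : ℝ}
    (hs : Convex ℝ s) (hm : 0 < m) (hh : ∀ x ∈ s, HasDerivAt h (h' x) x)
    (hρ : ∀ x ∈ s, HasDerivAt ρ (ρ' x) x) (hh' : ∀ x ∈ s, m ≤ h' x) (hρ' : ∀ x ∈ s, ‖ρ' x‖ ≤ B) :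
    ∀ᶠ t in 𝓝 (0 : ℝ), StrictMonoOn (fun x => h x + t * ρ x) s := by
  filter_upwards [eventually_forall_pos_add_mul hm hh' hρ'] with t ht
  have hderiv : ∀ x ∈ s, HasDerivAt (fun x => h x + t * ρ x) (h' x + t * ρ' x) x :=
    fun x hx => (hh x hx).add ((hρ x hx).const_mul t)
  exact strictMonoOn_of_hasDerivWithinAt_pos hs
    (fun x hx => (hderiv x hx).continuousAt.continuousWithinAt)
    (fun x hx => (hderiv x (interior_subset hx)).hasDerivWithinAt)
    (fun x hx => ht x (interior_subset hx))

lemma eventually_exists_setOf_add_mul_pos_eq_Ioc {h ρ h' ρ' : ℝ → ℝ} {a b x₀ : ℝ}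
    (hx₀ : x₀ ∈ Ioo a b) (hρ : ContinuousOn ρ (Icc a b)) (hmono : StrictMonoOn h (Icc a b))
    (hhx₀ : h x₀ = 0) (hh' : ∀ᶠ x in 𝓝 x₀, HasDerivAt h (h' x) x)
    (hρ' : ∀ᶠ x in 𝓝 x₀, HasDerivAt ρ (ρ' x) x) (hh'x₀ : 0 < h' x₀)
    (hh'c : ContinuousAt h' x₀) (hρ'c : ContinuousAt ρ' x₀) :
    ∀ᶠ t in 𝓝 (0 : ℝ), ∃ z ∈ Ioo a b,
      h z + t * ρ z = 0 ∧ {x ∈ Icc a b | 0 < h x + t * ρ x} = Ioc z b := by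
  obtain ⟨δ, hδ, hnear⟩ : ∃ δ > 0, ∀ x ∈ Icc (x₀ - δ) (x₀ + δ), x ∈ Ioo a b ∧
      HasDerivAt h (h' x) x ∧ HasDerivAt ρ (ρ' x) x ∧ h' x₀ / 2 ≤ h' x ∧ ‖ρ' x‖ ≤ ‖ρ' x₀‖ + 1 :=
    (nhds_basis_Icc_pos x₀).eventually_iff.1 <| by
      filter_upwards [Ioo_mem_nhds hx₀.1 hx₀.2, hh', hρ',
        hh'c.eventually_mem (Ici_mem_nhds (half_lt_self hh'x₀)),
        hρ'c.norm.eventually_mem (Iic_mem_nhds (lt_add_one _))] with x h₁ h₂ h₃ h₄ h₅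
      exact ⟨h₁, h₂, h₃, h₄, h₅⟩
  have hx₁ : x₀ - δ ∈ Ioo a b := (hnear _ ⟨le_rfl, by linarith⟩).1
  have hx₂ : x₀ + δ ∈ Ioo a b := (hnear _ ⟨by linarith, le_rfl⟩).1
  have hx₀I := Ioo_subset_Icc_self hx₀
  obtain ⟨B, hB⟩ := isCompact_Icc.exists_bound_of_continuousOn hρ
  have hneg := eventually_forall_pos_add_mul (K := Icc a (x₀ - δ)) (f := fun x => -h x)
    (g := fun x => -ρ x)
    (by simpa [hhx₀] using hmono (Ioo_subset_Icc_self hx₁) hx₀I (by linarith))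
    (fun x hx => neg_le_neg <| hmono.monotoneOn ⟨hx.1, hx.2.trans hx₁.2.le⟩
      (Ioo_subset_Icc_self hx₁) hx.2)
    (fun x hx => (norm_neg (ρ x)).symm ▸ hB x ⟨hx.1, hx.2.trans hx₁.2.le⟩)
  have hpos := eventually_forall_pos_add_mul (K := Icc (x₀ + δ) b) (f := h) (g := ρ)
    (by simpa [hhx₀] using hmono hx₀I (Ioo_subset_Icc_self hx₂) (by linarith))
    (fun x hx => hmono.monotoneOn (Ioo_subset_Icc_self hx₂)
      ⟨hx₂.1.le.trans hx.1, hx.2⟩ hx.1)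
    (fun x hx => hB x ⟨hx₂.1.le.trans hx.1, hx.2⟩)
  have hmono' := eventually_strictMonoOn_add_mul (convex_Icc (x₀ - δ) (x₀ + δ)) (half_pos hh'x₀)
    (fun x hx => (hnear x hx).2.1) (fun x hx => (hnear x hx).2.2.1)
    (fun x hx => (hnear x hx).2.2.2.1) (fun x hx => (hnear x hx).2.2.2.2)
  filter_upwards [hneg, hpos, hmono'] with t hneg hpos hmono'
  have hcont : ContinuousOn (fun x => h x + t * ρ x) (Icc (x₀ - δ) (x₀ + δ)) := fun x hx =>
    ((hnear x hx).2.1.add ((hnear x hx).2.2.1.const_mul t)).continuousAt.continuousWithinAt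
  obtain ⟨z, hz, hz0, hset⟩ := exists_zero_setOf_pos_eq_Ioc hx₁.1.le (by linarith) hx₂.2.le
    hcont hmono' (fun x hx => by linarith [hneg x hx]) hpos
  exact ⟨z, ⟨hx₁.1.trans hz.1, hz.2.trans hx₂.2⟩, hz0, hset⟩

lemma tendsto_of_eventually_setOf_pos_eq_Ioc {ψ : ℝ → ℝ → ℝ} {χ : ℝ → ℝ} {a b x₀ t₀ : ℝ}
    (hx₀ : x₀ ∈ Ioo a b) (hψ : ∀ x, ContinuousAt (ψ · x) t₀)
    (hneg : ∀ x ∈ Ico a x₀, ψ t₀ x < 0) (hpos : ∀ x ∈ Ioc x₀ b, 0 < ψ t₀ x)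
    (hχ : ∀ᶠ t in 𝓝 t₀, {x ∈ Icc a b | 0 < ψ t x} = Ioc (χ t) b) :
    Tendsto χ (𝓝 t₀) (𝓝 x₀) := by
  refine tendsto_order.2 ⟨fun y hy => ?_, fun y hy => ?_⟩
  · obtain ⟨y', hyy', hy'⟩ := exists_between (max_lt hy hx₀.1)
    filter_upwards [hχ, (hψ y').eventually_lt continuousAt_const
      (hneg y' ⟨(le_max_right _ _).trans hyy'.le, hy'⟩)] with t ht hψy'
    by_contra! hχy
    have hy'mem : y' ∈ Ioc (χ t) b := ⟨hχy.trans_lt ((le_max_left _ _).trans_lt hyy'), by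
      linarith [hx₀.2]⟩
    exact (ht ▸ hy'mem).2.asymm hψy'
  · obtain ⟨y', hy', hyy'⟩ := exists_between (lt_min hy hx₀.2)
    filter_upwards [hχ, continuousAt_const.eventually_lt (hψ y')
      (hpos y' ⟨hy', hyy'.le.trans (min_le_right _ _)⟩)] with t ht hψy'
    have hy'mem : y' ∈ {x ∈ Icc a b | 0 < ψ t x} :=
      ⟨⟨by linarith [hx₀.1], hyy'.le.trans (min_le_right _ _)⟩, hψy'⟩
    exact (ht ▸ hy'mem).1.trans (hyy'.trans_le (min_le_left _ _))
lemma hasDerivAt_of_add_mul_eq_zero {h ρ χ : ℝ → ℝ} {x₀ h'₀ : ℝ}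
    (hh : HasDerivAt h h'₀ x₀) (hh'₀ : h'₀ ≠ 0) (hhx₀ : h x₀ = 0) (hρ : ContinuousAt ρ x₀)
    (hχ : Tendsto χ (𝓝 0) (𝓝 x₀)) (hχ0 : χ 0 = x₀)
    (hroot : ∀ᶠ t in 𝓝 0, h (χ t) + t * ρ (χ t) = 0) :
    HasDerivAt χ (-(ρ x₀ / h'₀)) 0 := by
  have hρχ : Tendsto (fun t => ρ (χ t)) (𝓝 0) (𝓝 (ρ x₀)) := hρ.tendsto.comp hχ
  -- linearising `h` at `x₀` turns the root equation into `h'₀ (χ t - x₀) + t ρ (χ t) = o(χ t - x₀)`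
  have hlin : (fun t => h'₀ * (χ t - x₀) + t * ρ (χ t)) =o[𝓝 0] fun t => χ t - x₀ := by
    refine ((hasDerivAt_iff_isLittleO.1 hh).comp_tendsto hχ).neg_left.congr' ?_ .rfl
    filter_upwards [hroot] with t ht
    simp only [comp_apply, hhx₀, smul_eq_mul]
    linarith
  have hO : (fun t => χ t - x₀) =O[𝓝 0] fun t => t :=
    calc (fun t => χ t - x₀) =O[𝓝 0] fun t => h'₀ * (χ t - x₀) :=
          isBigO_self_const_mul hh'₀ _ _
      _ =O[𝓝 0] fun t => h'₀ * (χ t - x₀) - (h'₀ * (χ t - x₀) + t * ρ (χ t)) :=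
          (hlin.trans_isBigO (isBigO_self_const_mul hh'₀ _ _)).right_isBigO_sub
      _ =O[𝓝 0] fun t => t * 1 :=
          ((isBigO_refl _ _).mul (hρχ.isBigO_one (F := ℝ))).neg_left.congr_left fun t => by ring
      _ =O[𝓝 0] fun t => t := (isBigO_refl _ _).congr_left fun t => (mul_one t).symm
  have hρo : (fun t => t * (ρ (χ t) - ρ x₀)) =o[𝓝 0] fun t => t * 1 :=
    (isBigO_refl _ _).mul_isLittleO ((isLittleO_one_iff ℝ).2 (tendsto_sub_nhds_zero_iff.2 hρχ))
  rw [hasDerivAt_iff_isLittleO, hχ0]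
  refine (((hlin.trans_isBigO hO).sub (hρo.congr_right (by simp))).const_mul_left
    h'₀⁻¹).congr (fun t => ?_) (fun t => by simp)
  simp only [smul_eq_mul]
  field_simp
  ring

/-- The reserve value `x_{β + tρ}` of the perturbed strategy. -/
noncomputable def perturbedReserve (h ρ : ℝ → ℝ) (a b t : ℝ) : ℝ :=
  sInf {x ∈ Icc a b | 0 < h x + t * ρ x}

theorem perturbedReserve_spec {h ρ h' ρ' : ℝ → ℝ} {a b x₀ : ℝ} (hx₀ : x₀ ∈ Ioo a b)
    (hh : ∀ x ∈ Icc a b, HasDerivWithinAt h (h' x) (Icc a b) x) (hh'c : ContinuousOn h' (Icc a b))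
    (hρ : ∀ x ∈ Icc a b, HasDerivWithinAt ρ (ρ' x) (Icc a b) x) (hρ'c : ContinuousOn ρ' (Icc a b))
    (hmono : StrictMonoOn h (Icc a b)) (hhx₀ : h x₀ = 0) (hh'x₀ : 0 < h' x₀) :
    perturbedReserve h ρ a b 0 = x₀ ∧ HasDerivAt (perturbedReserve h ρ a b) (-(ρ x₀ / h' x₀)) 0 ∧
      ∀ᶠ t in 𝓝 0, perturbedReserve h ρ a b t ∈ Ioo a b ∧
        {x ∈ Icc a b | 0 < h x + t * ρ x} = Ioc (perturbedReserve h ρ a b t) b := by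
  set χ := perturbedReserve h ρ a b
  have hx₀I : x₀ ∈ Icc a b := Ioo_subset_Icc_self hx₀
  have hnhds : Icc a b ∈ 𝓝 x₀ := Icc_mem_nhds hx₀.1 hx₀.2
  have hderiv_near : ∀ {φ φ' : ℝ → ℝ}, (∀ x ∈ Icc a b, HasDerivWithinAt φ (φ' x) (Icc a b) x) →
      ∀ᶠ x in 𝓝 x₀, HasDerivAt φ (φ' x) x := fun hφ => by
    filter_upwards [Ioo_mem_nhds hx₀.1 hx₀.2] with x hx
    exact (hφ x (Ioo_subset_Icc_self hx)).hasDerivAt (Icc_mem_nhds hx.1 hx.2)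
  have hρc : ContinuousOn ρ (Icc a b) := fun x hx => (hρ x hx).continuousWithinAt
  have hthreshold : ∀ᶠ t in 𝓝 0, χ t ∈ Ioo a b ∧ h (χ t) + t * ρ (χ t) = 0 ∧
      {x ∈ Icc a b | 0 < h x + t * ρ x} = Ioc (χ t) b := by
    filter_upwards [eventually_exists_setOf_add_mul_pos_eq_Ioc hx₀ hρc hmono hhx₀
      (hderiv_near hh) (hderiv_near hρ) hh'x₀ (hh'c.continuousAt hnhds)
      (hρ'c.continuousAt hnhds)] with t ht
    obtain ⟨z, hz, hz0, hset⟩ := ht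
    have hχz : χ t = z := by simp only [χ, perturbedReserve, hset]; exact csInf_Ioc hz.2
    exact hχz ▸ ⟨hz, hz0, hset⟩
  have hχ0 : χ 0 = x₀ := by
    obtain ⟨hI, hroot, -⟩ := hthreshold.self_of_nhds
    exact hmono.injOn (Ioo_subset_Icc_self hI) hx₀I (by simpa [hhx₀] using hroot)
  refine ⟨hχ0, hasDerivAt_of_add_mul_eq_zero ((hh x₀ hx₀I).hasDerivAt hnhds) hh'x₀.ne' hhx₀
    (hρc.continuousAt hnhds) ?_ hχ0 (hthreshold.mono fun t ht => ht.2.1),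
    hthreshold.mono fun t ht => ⟨ht.1, ht.2.2⟩⟩
  exact tendsto_of_eventually_setOf_pos_eq_Ioc (ψ := fun t x => h x + t * ρ x) hx₀
    (fun x => by fun_prop)
    (fun x hx => by simpa [hhx₀] using hmono ⟨hx.1, hx.2.le.trans hx₀I.2⟩ hx₀I hx.2)
    (fun x hx => by simpa [hhx₀] using hmono hx₀I ⟨hx₀I.1.trans hx.1.le, hx.2⟩ hx.1)
    (hthreshold.mono fun t ht => ht.2.2)

section Leibniz

variable {E : Type*} [NormedAddCommGroup E] [NormedSpace ℝ E]

lemma hasDerivAt_integral_of_continuousOn_uncurry [CompleteSpace E] {G G' : ℝ → ℝ → E}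
    {a b t₀ : ℝ}
    (hG : ContinuousOn (uncurry G) (univ ×ˢ [[a, b]]))
    (hG' : ContinuousOn (uncurry G') (univ ×ˢ [[a, b]]))
    (hGt : ∀ x ∈ [[a, b]], ∀ t, HasDerivAt (G · x) (G' t x) t) :
    HasDerivAt (fun t => ∫ x in a..b, G t x) (∫ x in a..b, G' t₀ x) t₀ := by
  obtain ⟨C, hC⟩ := (isCompact_Icc.prod isCompact_uIcc).exists_bound_of_continuousOn
    (hG'.mono (prod_mono (subset_univ (Icc (t₀ - 1) (t₀ + 1))) subset_rfl))
  have hmeas : ∀ {H : ℝ → ℝ → E}, ContinuousOn (uncurry H) (univ ×ˢ [[a, b]]) → ∀ t,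
      AEStronglyMeasurable (H t) (volume.restrict (Ι a b)) := fun hH t =>
    ((hH.uncurry_left t (mem_univ t)).mono uIoc_subset_uIcc).aestronglyMeasurable
      measurableSet_uIoc
  exact (hasDerivAt_integral_of_dominated_loc_of_deriv_le
    (Icc_mem_nhds (sub_one_lt t₀) (lt_add_one t₀)) (.of_forall (hmeas hG))
    ((hG.uncurry_left t₀ (mem_univ t₀)).intervalIntegrable) (hmeas hG' t₀)
    (.of_forall fun x hx t ht => hC (t, x) ⟨ht, uIoc_subset_uIcc hx⟩) intervalIntegrable_const
    (.of_forall fun x hx t _ => hGt x (uIoc_subset_uIcc hx) t)).2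

lemma hasDerivAt_integral_upperLimit_of_continuousAt [CompleteSpace E] {G : ℝ → ℝ → E}
    {χ : ℝ → ℝ} {t₀ χ' : ℝ}
    (hG : ContinuousAt (uncurry G) (t₀, χ t₀))
    (hint : ∀ᶠ t in 𝓝 t₀, IntervalIntegrable (G t) volume (χ t₀) (χ t))
    (hχ : HasDerivAt χ χ' t₀) :
    HasDerivAt (fun t => ∫ x in χ t₀..χ t, G t x) (χ' • G t₀ (χ t₀)) t₀ := by
  set a := χ t₀
  have hlin : HasDerivAt (fun t => (χ t - a) • G t₀ a) (χ' • G t₀ a) t₀ :=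
    (hχ.sub_const a).smul_const _
  -- the integrand differs from `G t₀ a` by `o(1)` on an interval of length `O(t - t₀)`
  have hrem : (fun t => (∫ x in a..χ t, G t x) - (χ t - a) • G t₀ a) =o[𝓝 t₀]
      fun t => t - t₀ := by
    refine IsLittleO.trans_isBigO (isLittleO_iff.2 fun C hC => ?_) hχ.isBigO_sub
    obtain ⟨θ, hθ, hball⟩ := Metric.continuousAt_iff.1 hG C hC
    filter_upwards [hint, Metric.ball_mem_nhds t₀ hθ,
      hχ.continuousAt.preimage_mem_nhds (Metric.ball_mem_nhds a hθ)] with t ht htθ hχθ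
    rw [← intervalIntegral.integral_const, ← integral_sub ht intervalIntegrable_const]
    refine intervalIntegral.norm_integral_le_of_norm_le_const (fun x hx => ?_) |>.trans_eq
      (by rw [Real.norm_eq_abs])
    rw [← dist_eq_norm]
    exact (hball (x := (t, x))
      (max_lt htθ ((abs_sub_left_of_mem_uIcc (uIoc_subset_uIcc hx)).trans_lt hχθ))).le
  rw [hasDerivAt_iff_isLittleO]
  refine (hrem.add (hasDerivAt_iff_isLittleO.1 hlin)).congr_left fun t => ?_
  simp only [a, sub_self, zero_smul, integral_same]
  abel

theorem hasDerivAt_integral_lowerLimit_of_continuousOn [CompleteSpace E] {G G' : ℝ → ℝ → E}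
    {χ : ℝ → ℝ} {a b t₀ χ' : ℝ} (hG : ContinuousOn (uncurry G) (univ ×ˢ Icc a b))
    (hG' : ContinuousOn (uncurry G') (univ ×ˢ Icc a b))
    (hGt : ∀ x ∈ Icc a b, ∀ t, HasDerivAt (G · x) (G' t x) t)
    (hχ : HasDerivAt χ χ' t₀) (hχt₀ : χ t₀ ∈ Ioo a b) :
    HasDerivAt (fun t => ∫ x in χ t..b, G t x)
      ((∫ x in χ t₀..b, G' t₀ x) - χ' • G t₀ (χ t₀)) t₀ := by
  have hsub : ∀ {y}, y ∈ Icc a b → [[χ t₀, y]] ⊆ Icc a b :=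
    uIcc_subset_Icc (Ioo_subset_Icc_self hχt₀)
  have hb : b ∈ Icc a b := ⟨hχt₀.1.le.trans hχt₀.2.le, le_rfl⟩
  have hint : ∀ t, ∀ y ∈ Icc a b, IntervalIntegrable (G t) volume (χ t₀) y := fun t y hy =>
    ((hG.uncurry_left t (mem_univ t)).mono (hsub hy)).intervalIntegrable
  have hχI : ∀ᶠ t in 𝓝 t₀, χ t ∈ Icc a b := hχ.continuousAt (Icc_mem_nhds hχt₀.1 hχt₀.2)
  have hfixed := hasDerivAt_integral_of_continuousOn_uncurry (t₀ := t₀)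
    (hG.mono (prod_mono subset_rfl (hsub hb))) (hG'.mono (prod_mono subset_rfl (hsub hb)))
    fun x hx => hGt x (hsub hb hx)
  have hmoving := hasDerivAt_integral_upperLimit_of_continuousAt
    (hG.continuousAt (prod_mem_nhds univ_mem (Icc_mem_nhds hχt₀.1 hχt₀.2)))
    (hχI.mono fun t ht => hint t _ ht) hχ
  refine (hfixed.sub hmoving).congr_of_eventuallyEq ?_
  filter_upwards [hχI] with t ht
  exact (integral_interval_sub_left (hint t b hb) (hint t _ ht)).symm

lemma integral_ite_eq_of_setOf_eq_Ioc {p : ℝ → Prop} [DecidablePred p] {f g : ℝ → E}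
    {a b c : ℝ} (hc : c ∈ Icc a b) (hp : {x ∈ Icc a b | p x} = Ioc c b)
    (hfg : ∀ x ∈ Icc a b, p x → f x = g x) :
    ∫ x in a..b, (if p x then f x else 0) = ∫ x in c..b, g x := by
  have hab := hc.1.trans hc.2
  calc ∫ x in a..b, (if p x then f x else 0) = ∫ x in a..b, (Ioc c b).indicator g x := by
        refine integral_congr fun x hx => ?_
        rw [uIcc_of_le hab] at hx
        simp only [indicator, ← hp, mem_ofPred_eq, hx, true_and]
        split_ifs with hpx
        exacts [hfg x hx hpx, rfl]
    _ = ∫ x in c..b, g x := by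
        rw [integral_of_le hab, integral_of_le hc.2, setIntegral_indicator measurableSet_Ioc,
          Ioc_inter_Ioc, sup_eq_right.2 hc.1, inf_idem]

end Leibniz

section Integrand

variable {F f h ρ w : ℝ → ℝ} {s : Set ℝ}

lemma hasDerivAt_utilityIntegrand (hF : ∀ y, HasDerivAt F (f y) y) (x t : ℝ) :
    HasDerivAt (fun t => (x - h x - t * ρ x) * F (h x + t * ρ x) * w x)
      ((-ρ x * F (h x + t * ρ x) + (x - h x - t * ρ x) * (f (h x + t * ρ x) * ρ x)) * w x) t :=
  (((hasDerivAt_mul_const (ρ x)).const_sub (x - h x)).mul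
    ((hF _).comp t ((hasDerivAt_mul_const (ρ x)).const_add (h x)))).mul_const (w x)

lemma continuousOn_utilityIntegrand (hF : Continuous F) (hh : ContinuousOn h s)
    (hρ : ContinuousOn ρ s) (hw : ContinuousOn w s) :
    ContinuousOn (uncurry fun t x => (x - h x - t * ρ x) * F (h x + t * ρ x) * w x)
      (univ ×ˢ s) := by
  have hh₂ : ContinuousOn (fun p : ℝ × ℝ => h p.2) (univ ×ˢ s) :=
    hh.comp continuousOn_snd fun _ hp => hp.2
  have hρ₂ : ContinuousOn (fun p : ℝ × ℝ => ρ p.2) (univ ×ˢ s) :=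
    hρ.comp continuousOn_snd fun _ hp => hp.2
  have hw₂ : ContinuousOn (fun p : ℝ × ℝ => w p.2) (univ ×ˢ s) :=
    hw.comp continuousOn_snd fun _ hp => hp.2
  rw [uncurry_def]
  fun_prop

lemma continuousOn_utilityIntegrand_deriv (hF : Continuous F) (hf : Continuous f)
    (hh : ContinuousOn h s) (hρ : ContinuousOn ρ s) (hw : ContinuousOn w s) :
    ContinuousOn (uncurry fun t x =>
      (-ρ x * F (h x + t * ρ x) + (x - h x - t * ρ x) * (f (h x + t * ρ x) * ρ x)) * w x)
      (univ ×ˢ s) := by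
  have hh₂ : ContinuousOn (fun p : ℝ × ℝ => h p.2) (univ ×ˢ s) :=
    hh.comp continuousOn_snd fun _ hp => hp.2
  have hρ₂ : ContinuousOn (fun p : ℝ × ℝ => ρ p.2) (univ ×ˢ s) :=
    hρ.comp continuousOn_snd fun _ hp => hp.2
  have hw₂ : ContinuousOn (fun p : ℝ × ℝ => w p.2) (univ ×ˢ s) :=
    hw.comp continuousOn_snd fun _ hp => hp.2
  rw [uncurry_def]
  fun_prop

end Integrand

theorem myerson_utility_directional_derivative_general
    (M : ℝ)
    (f₁ : ℝ → ℝ) (hf₁cont : Continuous f₁)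
    (h ρ h' ρ' : ℝ → ℝ)
    (hh : ∀ x ∈ Set.Icc 0 M, HasDerivWithinAt h (h' x) (Set.Icc 0 M) x)
    (hh'cont : ContinuousOn h' (Set.Icc 0 M))
    (hρ : ∀ x ∈ Set.Icc 0 M, HasDerivWithinAt ρ (ρ' x) (Set.Icc 0 M) x)
    (hρ'cont : ContinuousOn ρ' (Set.Icc 0 M))
    (hhmono : StrictMonoOn h (Set.Icc 0 M))
    (xβ : ℝ) (hxβ : xβ ∈ Set.Ioo 0 M) (hhxβ : h xβ = 0) (hh'xβ : 0 < h' xβ)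
    (F_Z f_Z : ℝ → ℝ) (c : ℝ)
    (hFZ : ∀ z ∈ Set.Ici (0 : ℝ), HasDerivWithinAt F_Z (f_Z z) (Set.Ici 0) z)
    (hfZcont : ContinuousOn f_Z (Set.Ici 0))
    (hFZ0 : F_Z 0 = c)
    (U : ℝ → ℝ)
    (hU : ∀ t, U t = ∫ x in (0 : ℝ)..M,
      (if 0 < h x + t * ρ x
        then (x - h x - t * ρ x) * F_Z (h x + t * ρ x) * f₁ x
        else 0)) :
    HasDerivAt U
      ((∫ x in xβ..M, ρ x * ((x - h x) * f_Z (h x) - F_Z (h x)) * f₁ x)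
        + (ρ xβ / h' xβ) * c * f₁ xβ * xβ) 0 := by
  obtain ⟨hχ0, hχ, hthreshold⟩ :=
    perturbedReserve_spec hxβ hh hh'cont hρ hρ'cont hhmono hhxβ hh'xβ
  set χ := perturbedReserve h ρ 0 M
  set F := extendLinearBelowZero F_Z f_Z
  have hF : ∀ y, HasDerivAt F (f_Z (max y 0)) y := hasDerivAt_extendLinearBelowZero hFZ
  set g : ℝ → ℝ → ℝ := fun t x => (x - h x - t * ρ x) * F (h x + t * ρ x) * f₁ x
  have hUg : U =ᶠ[𝓝 0] fun t => ∫ x in χ t..M, g t x := by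
    filter_upwards [hthreshold] with t ht
    rw [hU t]
    exact integral_ite_eq_of_setOf_eq_Ioc (Ioo_subset_Icc_self ht.1) ht.2 fun x _ hx => by
      simp only [g, F, extendLinearBelowZero, if_pos hx.le]
  have hhc : ContinuousOn h (Icc 0 M) := fun x hx => (hh x hx).continuousWithinAt
  have hρc : ContinuousOn ρ (Icc 0 M) := fun x hx => (hρ x hx).continuousWithinAt
  have hFc : Continuous F := continuous_iff_continuousAt.2 fun y => (hF y).continuousAt
  have hfc : Continuous fun y => f_Z (max y 0) :=
    hfZcont.comp_continuous (by fun_prop) fun y => le_max_right y 0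
  have hLeibniz := hasDerivAt_integral_lowerLimit_of_continuousOn
    (continuousOn_utilityIntegrand hFc hhc hρc hf₁cont.continuousOn)
    (continuousOn_utilityIntegrand_deriv hFc hfc hhc hρc hf₁cont.continuousOn)
    (fun x _ t => hasDerivAt_utilityIntegrand hF x t) hχ (hχ0 ▸ hxβ)
  refine (hLeibniz.congr_of_eventuallyEq hUg).congr_deriv ?_
  rw [hχ0, integral_congr (g := fun x => ρ x * ((x - h x) * f_Z (h x) - F_Z (h x)) * f₁ x)]
  · simp [F, extendLinearBelowZero, hhxβ, hFZ0]
    ring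
  · intro x hx
    rw [uIcc_of_le hxβ.2.le] at hx
    have hhx : 0 ≤ h x := hhxβ ▸ hhmono.monotoneOn (Ioo_subset_Icc_self hxβ)
      ⟨hxβ.1.le.trans hx.1, hx.2⟩ hx.1
    simp only [F, extendLinearBelowZero, zero_mul, add_zero, sub_zero, max_eq_left hhx,
      if_pos hhx]
    ring

/-- Directional derivative of a strategic bidder's expected utility in the Myerson
auction when the virtualized-bid function `h` is perturbed to `h + t·ρ`: with value
density `f₁` supported in `[0,M]`, competition cdf `F_Z` (with density `f_Z` and
`F_Z(0) = c`), and reserve value `x_β ∈ (0,M)` (the zero of `h`, with `h'(x_β) > 0`),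
the utility `U(t) = ∫₀^M (x - h(x) - tρ(x)) F_Z(h(x)+tρ(x)) 1{h(x)+tρ(x)>0} f₁(x) dx`
is differentiable at `t = 0` with
`U'(0) = ∫_{x_β}^M ρ(x)[(x - h(x)) f_Z(h(x)) - F_Z(h(x))] f₁(x) dx
        + (ρ(x_β)/h'(x_β))·c·f₁(x_β)·x_β`. -/
theorem myerson_utility_directional_derivative
    (M : ℝ) (hM : 0 < M)
    (f₁ : ℝ → ℝ) (hf₁cont : Continuous f₁) (hf₁pos : ∀ x, 0 ≤ f₁ x)
    (hf₁supp : ∀ x, x ∉ Set.Icc 0 M → f₁ x = 0)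
    (h ρ h' ρ' : ℝ → ℝ)
    (hh : ∀ x ∈ Set.Icc 0 M, HasDerivWithinAt h (h' x) (Set.Icc 0 M) x)
    (hh'cont : ContinuousOn h' (Set.Icc 0 M))
    (hρ : ∀ x ∈ Set.Icc 0 M, HasDerivWithinAt ρ (ρ' x) (Set.Icc 0 M) x)
    (hρ'cont : ContinuousOn ρ' (Set.Icc 0 M))
    (hhmono : StrictMonoOn h (Set.Icc 0 M))
    (xβ : ℝ) (hxβ : xβ ∈ Set.Ioo 0 M) (hhxβ : h xβ = 0) (hh'xβ : 0 < h' xβ)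
    (F_Z f_Z : ℝ → ℝ) (c : ℝ)
    (hFZ : ∀ z ∈ Set.Ici (0 : ℝ), HasDerivWithinAt F_Z (f_Z z) (Set.Ici 0) z)
    (hfZcont : ContinuousOn f_Z (Set.Ici 0))
    (hFZmono : MonotoneOn F_Z (Set.Ici 0))
    (hFZ0 : F_Z 0 = c)
    (U : ℝ → ℝ)
    (hU : ∀ t, U t = ∫ x in (0 : ℝ)..M,
      (if 0 < h x + t * ρ x
        then (x - h x - t * ρ x) * F_Z (h x + t * ρ x) * f₁ x
        else 0)) :
    HasDerivAt U
      ((∫ x in xβ..M, ρ x * ((x - h x) * f_Z (h x) - F_Z (h x)) * f₁ x)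
        + (ρ xβ / h' xβ) * c * f₁ xβ * xβ) 0 :=
  myerson_utility_directional_derivative_general M f₁ hf₁cont h ρ h' ρ' hh hh'cont hρ hρ'cont hhmono
    xβ hxβ hhxβ hh'xβ F_Z f_Z c hFZ hfZcont hFZ0 U hU
end

section
/- Let μ ∈ ℝ, σ > 0 and ξ ∈ [−1, 0), let F(x) = 1 − (1 + ξ(x − μ)/σ)^{−1/ξ} on [μ, μ − σ/ξ] with density f = F', and let K ≥ 2 be an integer. Then the function H(x) = x + F(x)/((K − 1)·f(x)) is strictly increasing on the open interval (μ, μ − σ/ξ). -/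
/-- For the Generalized Pareto distribution with parameters `μ ∈ ℝ`, `σ > 0`,
`ξ ∈ [-1, 0)` (cdf `F(x) = 1 - (1 + ξ(x-μ)/σ)^{-1/ξ}` on `[μ, μ - σ/ξ]`, density
`f = F'`), and any integer `K ≥ 2`, the function `H(x) = x + F(x)/((K-1)·f(x))` is
strictly increasing on `(μ, μ - σ/ξ)`. -/
theorem generalized_pareto_H_strictMono
    (μ σ ξ : ℝ) (hσ : 0 < σ) (hξneg : ξ < 0) (hξge : -1 ≤ ξ)
    (K : ℕ) (hK : 2 ≤ K) (F : ℝ → ℝ)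
    (hF : ∀ x ∈ Set.Icc μ (μ - σ / ξ),
      F x = 1 - (1 + ξ * (x - μ) / σ) ^ (-1 / ξ)) :
    StrictMonoOn (fun x => x + F x / (((K : ℝ) - 1) * deriv F x))
      (Set.Ioo μ (μ - σ / ξ)) := by
  have hξ0 : ξ ≠ 0 := ne_of_lt hξneg
  have hσ0 : σ ≠ 0 := ne_of_gt hσ
  set p : ℝ := -1 / ξ with hp
  have hp1 : 1 ≤ p := by
    rw [hp, le_div_iff_of_neg hξneg]; linarith
  have hK1 : (0:ℝ) < (K:ℝ) - 1 := by
    have : (2:ℝ) ≤ (K:ℝ) := by exact_mod_cast hK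
    linarith
  set g : ℝ → ℝ := fun x =>
    x + σ * ((1 + ξ * (x - μ) / σ) ^ (1 - p) - (1 + ξ * (x - μ) / σ)) / ((K:ℝ) - 1)
    with hg
  have ht : ∀ x ∈ Set.Ioo μ (μ - σ / ξ), 0 < 1 + ξ * (x - μ) / σ := by
    intro x hx
    have h2 : x - μ < -(σ / ξ) := by have := hx.2; linarith
    have h3 : ξ * (x - μ) > ξ * (-(σ / ξ)) :=
      mul_lt_mul_of_neg_left h2 hξneg
    have h4 : ξ * (-(σ / ξ)) = -σ := by field_simp
    rw [h4] at h3
    have : ξ * (x - μ) / σ > -1 := by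
      rw [gt_iff_lt, lt_div_iff₀ hσ]; linarith
    linarith
  -- derivative of the inner affine map
  have hu : ∀ x : ℝ, HasDerivAt (fun y => 1 + ξ * (y - μ) / σ) (ξ / σ) x := by
    intro x
    have h := (((hasDerivAt_id x).sub_const μ).const_mul ξ).div_const σ
    have h2 := h.const_add 1
    simpa using h2
  -- derivative of F on the open interval
  have hderiv : ∀ x ∈ Set.Ioo μ (μ - σ / ξ),
      deriv F x = (1 + ξ * (x - μ) / σ) ^ (p - 1) / σ := by
    intro x hx
    have hne : (1 + ξ * (x - μ) / σ) ≠ 0 := ne_of_gt (ht x hx)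
    have hev : F =ᶠ[nhds x] (fun y => 1 - (1 + ξ * (y - μ) / σ) ^ p) := by
      filter_upwards [Ioo_mem_nhds hx.1 hx.2] with y hy
      exact hF y (Set.Ioo_subset_Icc_self hy)
    rw [Filter.EventuallyEq.deriv_eq hev]
    have h2 := (Real.hasDerivAt_rpow_const (p := p) (Or.inl hne)).comp x (hu x)
    have h3 : HasDerivAt (fun y => 1 - (1 + ξ * (y - μ) / σ) ^ p)
        (-(p * (1 + ξ * (x - μ) / σ) ^ (p - 1) * (ξ / σ))) x := by
      simpa [Function.comp] using h2.const_sub 1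
    rw [h3.deriv, hp]
    field_simp
  have heq : Set.EqOn (fun x => x + F x / (((K : ℝ) - 1) * deriv F x)) g
      (Set.Ioo μ (μ - σ / ξ)) := by
    intro x hx
    simp only [hg]
    have htpos := ht x hx
    set t := 1 + ξ * (x - μ) / σ with hts
    have hFx : F x = 1 - t ^ p := hF x (Set.Ioo_subset_Icc_self hx)
    have hdx : deriv F x = t ^ (p - 1) / σ := hderiv x hx
    have htne : t ≠ 0 := ne_of_gt htpos
    have hC : t * t ^ (p - 1) = t ^ p := by
      nth_rewrite 1 [← Real.rpow_one t]
      rw [← Real.rpow_add htpos]; ring_nf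
    have hB : t ^ (p - 1) * t ^ (1 - p) = 1 := by
      rw [← Real.rpow_add htpos]; norm_num
    have htp : (0:ℝ) < t ^ (p - 1) := Real.rpow_pos_of_pos htpos _
    have main : (1 - t ^ p) / (((K:ℝ) - 1) * (t ^ (p - 1) / σ))
        = σ * (t ^ (1 - p) - t) / ((K:ℝ) - 1) := by
      rw [div_eq_div_iff (by positivity) hK1.ne']
      have expand : σ * (t ^ (1 - p) - t) * (((K:ℝ) - 1) * (t ^ (p - 1) / σ))
          = ((K:ℝ) - 1) * (t ^ (p - 1) * t ^ (1 - p) - t * t ^ (p - 1)) := by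
        field_simp
      rw [expand, hB, hC]
      ring
    rw [hFx, hdx, main]
  have hgd : ∀ x ∈ Set.Ioo μ (μ - σ / ξ),
      HasDerivAt g
        (1 + σ * ((1 - p) * (1 + ξ * (x - μ) / σ) ^ (1 - p - 1) * (ξ / σ) - ξ / σ)
          / ((K:ℝ) - 1)) x := by
    intro x hx
    have hne : (1 + ξ * (x - μ) / σ) ≠ 0 := ne_of_gt (ht x hx)
    have h2 := (Real.hasDerivAt_rpow_const (p := 1 - p) (Or.inl hne)).comp x (hu x)
    have h3 := ((h2.sub (hu x)).const_mul σ).div_const ((K:ℝ) - 1)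
    exact (hasDerivAt_id x).add h3
  have hgmono : StrictMonoOn g (Set.Ioo μ (μ - σ / ξ)) := by
    apply strictMonoOn_of_deriv_pos (convex_Ioo _ _)
    · intro x hx
      exact (hgd x hx).continuousAt.continuousWithinAt
    · intro x hx
      rw [interior_Ioo] at hx
      rw [(hgd x hx).deriv]
      set t := 1 + ξ * (x - μ) / σ with hts
      have htpos := ht x hx
      have hD : (0:ℝ) < t ^ (1 - p - 1) := Real.rpow_pos_of_pos htpos _
      have key : 0 < ξ * ((1 - p) * t ^ (1 - p - 1) - 1) := by
        apply mul_pos_of_neg_of_neg hξneg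
        nlinarith
      have hrw : σ * ((1 - p) * t ^ (1 - p - 1) * (ξ / σ) - ξ / σ)
          = ξ * ((1 - p) * t ^ (1 - p - 1) - 1) := by
        field_simp
      rw [hrw]
      have := div_pos key hK1
      linarith
  intro x hx y hy hxy
  have hx' := heq hx
  have hy' := heq hy
  simp only at hx' hy' ⊢
  rw [hx', hy']
  exact hgmono hx hy hxy
end

section
/- Let 0 ≤ μ < σ and ξ ∈ [−1, 0). Let F be the Generalized Pareto cdf F(u) = 1 − (1 + ξ(u − μ)/σ)^{−1/ξ} on [μ, μ − σ/ξ], extended by F(u) = 0 for u < μ and F(u) = 1 for u > μ − σ/ξ, with density f = F' on (μ, μ − σ/ξ). Let K ≥ 2 be an integer, ψ(u) = (1 − ξ)u + ξμ − σ (so ψ⁻¹(t) = t/(1 − ξ) + r), r = (σ − ξμ)/(1 − ξ) (so ψ(r) = 0 and μ < r < μ − σ/ξ), and H(u) = u + F(u)/((K − 1)·f(u)) for u ∈ (μ, μ − σ/ξ). Fix x with r < x ≤ μ − σ/ξ. Then the function g(t) = (x − t)·F(t/(1 − ξ) + r)^{K−1} attains its maximum over t ∈ [0, x] at a unique point t*,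 and: if ψ⁻¹(x) ≤ lim_{u↓r} H(u) then t* = 0, while if ψ⁻¹(x) > lim_{u↓r} H(u) then t* > 0 and t* satisfies ψ⁻¹(x) = H(ψ⁻¹(t*)). -/
open Set Filter

/-!
Put `u = t / (1 - ξ) + r = ψ⁻¹(t)`. Then
`g'(t) = (K - 1) F(u)^(K-2) f(u) (ψ⁻¹(x) - H(u))`, so `g'` has the sign of `ψ⁻¹(x) - H(u)`.
For the Generalized Pareto distribution `F / f = σ (A^(1/ξ + 1) - A)` with
`A = 1 + ξ (u - μ) / σ` decreasing in `u`; as `1/ξ + 1 ≤ 0` when `ξ ≥ -1`, `H` is strictly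
increasing. A maximizer of `g` on `[0, x]` exists by compactness and is not `x`, since
`g(x) = 0 < g(0)`. At `0` the one-sided Fermat condition forces `ψ⁻¹(x) ≤ H(r)`; at an interior
point Fermat forces `H(u) = ψ⁻¹(x)`. Strict monotonicity of `H` makes these alternatives
exclusive and the interior solution unique.
-/

section Unimodal

variable {φ H w : ℝ → ℝ} {a b c : ℝ}

theorem IsMaxOn.eq_left_or_mem_Ioo_of_hasDerivAt {t : ℝ} (hmax : IsMaxOn φ (Icc a b) t)
    (ht : t ∈ Icc a b) (hφ : ∀ s ∈ Ico a b, HasDerivAt φ (w s * (c - H s)) s)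
    (hw : ∀ s ∈ Ico a b, 0 < w s) (hφb : φ b < φ a) :
    (t = a ∧ c ≤ H a) ∨ (t ∈ Ioo a b ∧ H t = c) := by
  have htb : t < b := ht.2.lt_of_ne <| by
    rintro rfl
    exact hφb.not_ge (hmax ⟨le_rfl, ht.1.trans ht.2⟩)
  rcases ht.1.eq_or_lt with rfl | hat
  · refine .inl ⟨rfl, ?_⟩
    have hnonpos := hmax.localize.hasFDerivWithinAt_nonpos
      (hφ a ⟨le_rfl, htb⟩).hasDerivWithinAt.hasFDerivWithinAt
      (sub_mem_posTangentConeAt_of_segment_subset (segment_eq_Icc ht.2).subset)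
    simp only [ContinuousLinearMap.toSpanSingleton_apply, smul_eq_mul, ← mul_assoc] at hnonpos
    exact sub_nonpos.1 <| nonpos_of_mul_nonpos_right hnonpos <|
      mul_pos (sub_pos.2 htb) (hw a ⟨le_rfl, htb⟩)
  · refine .inr ⟨⟨hat, htb⟩, ?_⟩
    have hzero := (hmax.localize.isLocalMax (Icc_mem_nhds hat htb)).hasDerivAt_eq_zero
      (hφ t ⟨hat.le, htb⟩)
    exact (sub_eq_zero.1 ((mul_eq_zero.1 hzero).resolve_left (hw t ⟨hat.le, htb⟩).ne')).symm

theorem exists_unique_isMaxOn_Icc_of_hasDerivAt (hab : a < b) (hφc : ContinuousOn φ (Icc a b))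
    (hφ : ∀ s ∈ Ico a b, HasDerivAt φ (w s * (c - H s)) s) (hw : ∀ s ∈ Ico a b, 0 < w s)
    (hH : StrictMonoOn H (Ico a b)) (hφb : φ b < φ a) :
    ∃ t₀ ∈ Icc a b, IsMaxOn φ (Icc a b) t₀ ∧
      (∀ t ∈ Icc a b, IsMaxOn φ (Icc a b) t → t = t₀) ∧
      (c ≤ H a → t₀ = a) ∧ (H a < c → a < t₀ ∧ H t₀ = c) := by
  obtain ⟨t₀, ht₀, hmax₀⟩ := isCompact_Icc.exists_isMaxOn (nonempty_Icc.2 hab.le) hφc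
  have hcases (t : ℝ) (ht : t ∈ Icc a b) (hmax : IsMaxOn φ (Icc a b) t) :=
    hmax.eq_left_or_mem_Ioo_of_hasDerivAt ht hφ hw hφb
  have hinterior : ∀ t ∈ Ioo a b, H t = c → H a < c := fun t ht h =>
    h ▸ hH ⟨le_rfl, hab⟩ ⟨ht.1.le, ht.2⟩ ht.1
  refine ⟨t₀, ht₀, hmax₀, fun t ht hmax => ?_, fun hc => ?_, fun hc => ?_⟩
  · rcases hcases t ht hmax, hcases t₀ ht₀ hmax₀ with
      ⟨⟨rfl, hle⟩ | ⟨ht', hHt⟩, ⟨rfl, hle₀⟩ | ⟨ht₀', hHt₀⟩⟩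
    · rfl
    · exact absurd (hinterior t₀ ht₀' hHt₀) hle.not_gt
    · exact absurd (hinterior t ht' hHt) hle₀.not_gt
    · exact hH.injOn (Ioo_subset_Ico_self ht') (Ioo_subset_Ico_self ht₀') (hHt.trans hHt₀.symm)
  · rcases hcases t₀ ht₀ hmax₀ with ⟨rfl, -⟩ | ⟨ht₀', hHt₀⟩
    · rfl
    · exact absurd (hinterior t₀ ht₀' hHt₀) hc.not_gt
  · rcases hcases t₀ ht₀ hmax₀ with ⟨-, hle⟩ | ⟨ht₀', hHt₀⟩
    · exact absurd hc hle.not_gt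
    · exact ⟨ht₀'.1, hHt₀⟩

end Unimodal

/-- The utility `(x - t) F(ψ⁻¹ t)^n` of the virtualized bid `t` at value `x`, where
`ψ⁻¹ t = t / c + r`. -/
noncomputable def shadingUtility (F : ℝ → ℝ) (n : ℕ) (c r x t : ℝ) : ℝ :=
  (x - t) * F (t / c + r) ^ n

section Shading

variable {F f : ℝ → ℝ} {n : ℕ} {c r x : ℝ}

theorem hasDerivAt_shadingUtility (hn : n ≠ 0) (hc : c ≠ 0) {t : ℝ}
    (hF : HasDerivAt F (f (t / c + r)) (t / c + r)) (hf : f (t / c + r) ≠ 0) :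
    HasDerivAt (shadingUtility F n c r x)
      (n * F (t / c + r) ^ (n - 1) * f (t / c + r) *
        (x / c + r - (t / c + r + F (t / c + r) / (n * f (t / c + r))))) t := by
  have hψ : HasDerivAt (fun s => s / c + r) (1 / c) t := ((hasDerivAt_id t).div_const c).add_const r
  have h := ((hasDerivAt_id t).const_sub x).mul ((hF.comp t hψ).pow n)
  refine (h : HasDerivAt (shadingUtility F n c r x) _ t).congr_deriv ?_
  obtain ⟨m, rfl⟩ := Nat.exists_eq_add_one_of_ne_zero hn
  simp only [Pi.pow_apply, Function.comp_apply, id, Nat.add_sub_cancel, Nat.cast_succ]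
  generalize F (t / c + r) = A, f (t / c + r) = B at hf ⊢
  field_simp
  ring

theorem exists_unique_isMaxOn_shadingUtility {H : ℝ → ℝ} (hn : n ≠ 0) (hc : 0 < c) (hx : 0 < x)
    (hFc : ContinuousOn F (Icc r (x / c + r)))
    (hF : ∀ u ∈ Ico r (x / c + r), HasDerivAt F (f u) u)
    (hFpos : ∀ u ∈ Ico r (x / c + r), 0 < F u) (hfpos : ∀ u ∈ Ico r (x / c + r), 0 < f u)
    (hH : ∀ u ∈ Ico r (x / c + r), H u = u + F u / (n * f u))
    (hHmono : StrictMonoOn H (Ico r (x / c + r))) :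
    ∃ t₀ ∈ Icc 0 x, IsMaxOn (shadingUtility F n c r x) (Icc 0 x) t₀ ∧
      (∀ t ∈ Icc 0 x, IsMaxOn (shadingUtility F n c r x) (Icc 0 x) t → t = t₀) ∧
      (x / c + r ≤ H r → t₀ = 0) ∧ (H r < x / c + r → 0 < t₀ ∧ x / c + r = H (t₀ / c + r)) := by
  have hψ : StrictMono (fun t : ℝ => t / c + r) := fun s t hst => by simp only; gcongr
  have hIcc : MapsTo (fun t : ℝ => t / c + r) (Icc 0 x) (Icc r (x / c + r)) := fun t ht =>
    ⟨by simpa using hψ.monotone ht.1, hψ.monotone ht.2⟩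
  have hIco : MapsTo (fun t : ℝ => t / c + r) (Ico 0 x) (Ico r (x / c + r)) := fun t ht =>
    ⟨by simpa using hψ.monotone ht.1, hψ ht.2⟩
  have hcont : ContinuousOn (shadingUtility F n c r x) (Icc 0 x) :=
    (continuousOn_const.sub continuousOn_id).mul ((hFc.comp (by fun_prop) hIcc).pow n)
  have hderiv (t : ℝ) (ht : t ∈ Ico 0 x) : HasDerivAt (shadingUtility F n c r x)
      (n * F (t / c + r) ^ (n - 1) * f (t / c + r) * (x / c + r - H (t / c + r))) t := by
    have h := hasDerivAt_shadingUtility (x := x) hn hc.ne' (hF _ (hIco ht)) (hfpos _ (hIco ht)).ne'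
    rwa [← hH _ (hIco ht)] at h
  have hweight (t : ℝ) (ht : t ∈ Ico 0 x) : 0 < n * F (t / c + r) ^ (n - 1) * f (t / c + r) := by
    have := hFpos _ (hIco ht)
    have := hfpos _ (hIco ht)
    have : (0 : ℝ) < n := by exact_mod_cast Nat.pos_of_ne_zero hn
    positivity
  have hends : shadingUtility F n c r x x < shadingUtility F n c r x 0 := by
    have := hFpos r ⟨le_rfl, by simpa using hψ hx⟩
    simp only [shadingUtility, sub_self, zero_mul, sub_zero, zero_div, zero_add]
    positivity
  obtain ⟨t₀, ht₀, hmax, huniq, hle, hlt⟩ := exists_unique_isMaxOn_Icc_of_hasDerivAt hx hcont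
    hderiv hweight (hHmono.comp (hψ.strictMonoOn _) hIco) hends
  refine ⟨t₀, ht₀, hmax, huniq, fun h => hle (by simpa using h), fun h => ?_⟩
  obtain ⟨ht₀pos, hHt₀⟩ := hlt (by simpa using h)
  exact ⟨ht₀pos, hHt₀.symm⟩

end Shading

/-- The Generalized Pareto cdf and density, by their formulas on the support `[μ, μ - σ / ξ]`. -/
noncomputable def gpdCdf (μ σ ξ u : ℝ) : ℝ := 1 - (1 + ξ * (u - μ) / σ) ^ (-1 / ξ)

noncomputable def gpdPdf (μ σ ξ u : ℝ) : ℝ := (1 + ξ * (u - μ) / σ) ^ (-1 / ξ - 1) / σ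

section GeneralizedPareto

variable {μ σ ξ u : ℝ}

theorem gpd_base_pos (hσ : 0 < σ) (hξ : ξ < 0) (hu : u < μ - σ / ξ) :
    0 < 1 + ξ * (u - μ) / σ := by
  have h : 1 + ξ * (u - μ) / σ = ξ / σ * (u - (μ - σ / ξ)) := by
    field_simp [hξ.ne, hσ.ne']
    ring
  rw [h]
  exact mul_pos_of_neg_of_neg (div_neg_of_neg_of_pos hξ hσ) (sub_neg.2 hu)

theorem gpd_base_lt_one (hσ : 0 < σ) (hξ : ξ < 0) (hu : μ < u) : 1 + ξ * (u - μ) / σ < 1 :=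
  add_lt_of_neg_right _ (div_neg_of_neg_of_pos (mul_neg_of_neg_of_pos hξ (sub_pos.2 hu)) hσ)

theorem continuous_gpdCdf (hξ : ξ < 0) : Continuous (gpdCdf μ σ ξ) :=
  continuous_const.sub <| (by fun_prop : Continuous fun u => 1 + ξ * (u - μ) / σ).rpow_const
    fun _ => .inr (div_nonneg_of_nonpos (by norm_num) hξ.le)

theorem hasDerivAt_gpdCdf (hξ : ξ ≠ 0) (hu : 1 + ξ * (u - μ) / σ ≠ 0) :
    HasDerivAt (gpdCdf μ σ ξ) (gpdPdf μ σ ξ u) u := by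
  have hbase : HasDerivAt (fun v => 1 + ξ * (v - μ) / σ) (ξ / σ) u := by
    simpa using ((((hasDerivAt_id u).sub_const μ).const_mul ξ).div_const σ).const_add 1
  refine ((hbase.rpow_const (.inl hu)).const_sub 1).congr_deriv ?_
  rw [gpdPdf]
  field_simp

theorem gpdCdf_pos (hσ : 0 < σ) (hξ : ξ < 0) (hu : u ∈ Ioo μ (μ - σ / ξ)) :
    0 < gpdCdf μ σ ξ u :=
  sub_pos.2 <| Real.rpow_lt_one (gpd_base_pos hσ hξ hu.2).le (gpd_base_lt_one hσ hξ hu.1)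
    (div_pos_of_neg_of_neg (by norm_num) hξ)

theorem gpdPdf_pos (hσ : 0 < σ) (hξ : ξ < 0) (hu : u < μ - σ / ξ) : 0 < gpdPdf μ σ ξ u :=
  div_pos (Real.rpow_pos_of_pos (gpd_base_pos hσ hξ hu) _) hσ

theorem gpdCdf_div_gpdPdf (hσ : σ ≠ 0) (hu : 0 < 1 + ξ * (u - μ) / σ) :
    gpdCdf μ σ ξ u / gpdPdf μ σ ξ u =
      σ * ((1 + ξ * (u - μ) / σ) ^ (1 / ξ + 1) - (1 + ξ * (u - μ) / σ)) := by
  set A := 1 + ξ * (u - μ) / σ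
  have hpow : A ^ (-1 / ξ) = A ^ (-1 / ξ - 1) * A := by
    rw [← Real.rpow_add_one hu.ne']; ring_nf
  have hinv : A ^ (1 / ξ + 1) * A ^ (-1 / ξ - 1) = 1 := by
    rw [← Real.rpow_add hu]; ring_nf; exact Real.rpow_zero A
  have hpdf : A ^ (-1 / ξ - 1) / σ ≠ 0 := div_ne_zero (Real.rpow_pos_of_pos hu _).ne' hσ
  rw [gpdCdf, gpdPdf, div_eq_iff hpdf, hpow, mul_div_assoc', mul_assoc,
    mul_div_cancel_left₀ _ hσ]
  linear_combination -hinv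

theorem strictMonoOn_add_gpdCdf_div_gpdPdf (hσ : 0 < σ) (hξ : ξ < 0) (hξ' : -1 ≤ ξ) {m : ℝ}
    (hm : 0 < m) :
    StrictMonoOn (fun u => u + gpdCdf μ σ ξ u / (m * gpdPdf μ σ ξ u)) (Iio (μ - σ / ξ)) := by
  intro u hu v hv huv
  have hAu := gpd_base_pos hσ hξ hu
  have hAv := gpd_base_pos hσ hξ hv
  have hAvu : 1 + ξ * (v - μ) / σ < 1 + ξ * (u - μ) / σ :=
    add_lt_add_right
      (div_lt_div_of_pos_right (mul_lt_mul_of_neg_left (sub_lt_sub_right huv μ) hξ) hσ) 1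
  have hexp : 1 / ξ + 1 ≤ 0 := by
    have : 1 / ξ ≤ -1 := by rw [div_le_iff_of_neg hξ]; linarith
    linarith
  have hpow := Real.rpow_le_rpow_of_nonpos hAv hAvu.le hexp
  simp only [mul_comm m, ← div_div, gpdCdf_div_gpdPdf hσ.ne' hAu, gpdCdf_div_gpdPdf hσ.ne' hAv]
  have := div_le_div_of_nonneg_right
    (mul_le_mul_of_nonneg_left (sub_le_sub hpow hAvu.le) hσ.le) hm.le
  linarith

theorem continuousAt_add_gpdCdf_div_gpdPdf (hσ : 0 < σ) (hξ : ξ < 0) {m : ℝ} (hm : m ≠ 0)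
    (hu : u < μ - σ / ξ) :
    ContinuousAt (fun v => v + gpdCdf μ σ ξ v / (m * gpdPdf μ σ ξ v)) u := by
  have hpdf : ContinuousAt (gpdPdf μ σ ξ) u :=
    ((by fun_prop : Continuous fun v => 1 + ξ * (v - μ) / σ).continuousAt.rpow_const
      (.inl (gpd_base_pos hσ hξ hu).ne')).div_const σ
  exact continuousAt_id.add <| (continuous_gpdCdf hξ).continuousAt.div
    (continuousAt_const.mul hpdf) (mul_ne_zero hm (gpdPdf_pos hσ hξ hu).ne')

theorem hasDerivAt_of_eqOn_gpdCdf (hσ : 0 < σ) (hξ : ξ < 0) {F : ℝ → ℝ}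
    (hF : EqOn F (gpdCdf μ σ ξ) (Icc μ (μ - σ / ξ))) (hu : u ∈ Ioo μ (μ - σ / ξ)) :
    HasDerivAt F (gpdPdf μ σ ξ u) u :=
  (hasDerivAt_gpdCdf hξ.ne (gpd_base_pos hσ hξ hu.2).ne').congr_of_eventuallyEq
    (eventually_of_mem (Icc_mem_nhds hu.1 hu.2) hF)

theorem exists_unique_isMaxOn_shadingUtility_of_eqOn_gpdCdf (hσ : 0 < σ) (hξ : ξ < 0)
    (hξ' : -1 ≤ ξ) {F H : ℝ → ℝ} (hF : EqOn F (gpdCdf μ σ ξ) (Icc μ (μ - σ / ξ))) {n : ℕ}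
    (hn : n ≠ 0)
    (hH : EqOn (fun u => u + gpdCdf μ σ ξ u / (n * gpdPdf μ σ ξ u)) H (Ioo μ (μ - σ / ξ)))
    {c r x : ℝ} (hc : 0 < c) (hr : μ < r) (hx : 0 < x) (hxtop : x / c + r ≤ μ - σ / ξ) :
    ∃ t₀ ∈ Icc 0 x, IsMaxOn (shadingUtility F n c r x) (Icc 0 x) t₀ ∧
      (∀ t ∈ Icc 0 x, IsMaxOn (shadingUtility F n c r x) (Icc 0 x) t → t = t₀) ∧
      (x / c + r ≤ H r → t₀ = 0) ∧ (H r < x / c + r → 0 < t₀ ∧ x / c + r = H (t₀ / c + r)) := by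
  have hsupp : Ico r (x / c + r) ⊆ Ioo μ (μ - σ / ξ) := fun u hu =>
    ⟨hr.trans_le hu.1, hu.2.trans_le hxtop⟩
  have hHmono : StrictMonoOn H (Ioo μ (μ - σ / ξ)) :=
    ((strictMonoOn_add_gpdCdf_div_gpdPdf hσ hξ hξ' (Nat.cast_pos.2 (Nat.pos_of_ne_zero hn))).mono
      Ioo_subset_Iio_self).congr hH
  refine exists_unique_isMaxOn_shadingUtility hn hc hx
    ((continuous_gpdCdf hξ).continuousOn.congr fun u hu => hF ⟨hr.le.trans hu.1, hu.2.trans hxtop⟩)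
    (fun u hu => hasDerivAt_of_eqOn_gpdCdf hσ hξ hF (hsupp hu)) (fun u hu => ?_)
    (fun u hu => gpdPdf_pos hσ hξ (hsupp hu).2) (fun u hu => ?_) (hHmono.mono hsupp)
  · rw [hF (Ioo_subset_Icc_self (hsupp hu))]
    exact gpdCdf_pos hσ hξ (hsupp hu)
  · rw [← hH (hsupp hu), hF (Ioo_subset_Icc_self (hsupp hu))]

end GeneralizedPareto

theorem optimal_virtualized_bid_generalized_pareto_general
    (μ σ ξ : ℝ) (hμ : 0 ≤ μ) (hμσ : μ < σ) (hξneg : ξ < 0) (hξge : -1 ≤ ξ)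
    (K : ℕ) (hK : 2 ≤ K) (F : ℝ → ℝ)
    (hFmid : ∀ u ∈ Set.Icc μ (μ - σ / ξ),
      F u = 1 - (1 + ξ * (u - μ) / σ) ^ (-1 / ξ))
    (r : ℝ) (hr : r = (σ - ξ * μ) / (1 - ξ))
    (H : ℝ → ℝ)
    (hH : ∀ u ∈ Set.Ioo μ (μ - σ / ξ),
      H u = u + F u / (((K : ℝ) - 1) * deriv F u))
    (x : ℝ) (hxr : r < x) (hxtop : x ≤ μ - σ / ξ)
    (g : ℝ → ℝ) (hg : ∀ t, g t = (x - t) * (F (t / (1 - ξ) + r)) ^ (K - 1)) :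
    ∃ tstar ∈ Set.Icc (0 : ℝ) x,
      IsMaxOn g (Set.Icc 0 x) tstar ∧
      (∀ t ∈ Set.Icc (0 : ℝ) x, IsMaxOn g (Set.Icc 0 x) t → t = tstar) ∧
      ∀ L : ℝ, Filter.Tendsto H (nhdsWithin r (Set.Ioi r)) (nhds L) →
        ((x / (1 - ξ) + r ≤ L → tstar = 0) ∧
         (L < x / (1 - ξ) + r →
           0 < tstar ∧ x / (1 - ξ) + r = H (tstar / (1 - ξ) + r))) := by
  obtain rfl : g = shadingUtility F (K - 1) (1 - ξ) r x := funext hg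
  have hσ : 0 < σ := hμ.trans_lt hμσ
  have hc : 0 < 1 - ξ := by linarith
  have hμr : μ < r := by rw [hr, lt_div_iff₀ hc]; nlinarith
  have hxtop' : x / (1 - ξ) + r ≤ μ - σ / ξ := by
    have htop : (μ - σ / ξ) * (1 - ξ) = μ - σ / ξ + (σ - ξ * μ) := by
      field_simp [hξneg.ne]
      ring
    rw [hr, ← add_div, div_le_iff₀ hc, htop]
    linarith
  have hHgpd : EqOn (fun u => u + gpdCdf μ σ ξ u / (((K - 1 : ℕ) : ℝ) * gpdPdf μ σ ξ u)) H
      (Ioo μ (μ - σ / ξ)) := fun u hu => by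
    rw [hH u hu, (hasDerivAt_of_eqOn_gpdCdf hσ hξneg hFmid hu).deriv,
      hFmid u (Ioo_subset_Icc_self hu), Nat.cast_sub (by omega), Nat.cast_one]
    rfl
  obtain ⟨t₀, ht₀, hmax, huniq, hle, hlt⟩ := exists_unique_isMaxOn_shadingUtility_of_eqOn_gpdCdf
    hσ hξneg hξge hFmid (by omega) hHgpd hc hμr (by linarith) hxtop'
  have hHr : ContinuousAt H r :=
    (continuousAt_add_gpdCdf_div_gpdPdf hσ hξneg (Nat.cast_ne_zero.2 (by omega : K - 1 ≠ 0))
      (hxr.trans_le hxtop)).congr (eventually_of_mem (Ioo_mem_nhds hμr (hxr.trans_le hxtop)) hHgpd)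
  refine ⟨t₀, ht₀, hmax, huniq, fun L hL => ?_⟩
  obtain rfl := tendsto_nhds_unique hL (hHr.tendsto.mono_left nhdsWithin_le_nhds)
  exact ⟨hle, hlt⟩

/-- Pointwise optimization underlying the optimal shading strategy against the
Myerson auction with `K - 1` Generalized Pareto opponents: for `r < x ≤ μ - σ/ξ`,
the function `g(t) = (x - t)·F(t/(1-ξ) + r)^{K-1}` has a unique maximizer `t*` on
`[0, x]`; moreover `t* = 0` if `ψ⁻¹(x) ≤ lim_{u↓r} H(u)`, and otherwise `t* > 0`
satisfies `ψ⁻¹(x) = H(ψ⁻¹(t*))`, where `ψ⁻¹(t) = t/(1-ξ) + r`, `r` is the monopoly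
reserve and `H(u) = u + F(u)/((K-1)·f(u))`. -/
theorem optimal_virtualized_bid_generalized_pareto
    (μ σ ξ : ℝ) (hμ : 0 ≤ μ) (hμσ : μ < σ) (hξneg : ξ < 0) (hξge : -1 ≤ ξ)
    (K : ℕ) (hK : 2 ≤ K) (F : ℝ → ℝ)
    (hFlow : ∀ u, u < μ → F u = 0)
    (hFhigh : ∀ u, μ - σ / ξ < u → F u = 1)
    (hFmid : ∀ u ∈ Set.Icc μ (μ - σ / ξ),
      F u = 1 - (1 + ξ * (u - μ) / σ) ^ (-1 / ξ))
    (r : ℝ) (hr : r = (σ - ξ * μ) / (1 - ξ))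
    (H : ℝ → ℝ)
    (hH : ∀ u ∈ Set.Ioo μ (μ - σ / ξ),
      H u = u + F u / (((K : ℝ) - 1) * deriv F u))
    (x : ℝ) (hxr : r < x) (hxtop : x ≤ μ - σ / ξ)
    (g : ℝ → ℝ) (hg : ∀ t, g t = (x - t) * (F (t / (1 - ξ) + r)) ^ (K - 1)) :
    ∃ tstar ∈ Set.Icc (0 : ℝ) x,
      IsMaxOn g (Set.Icc 0 x) tstar ∧
      (∀ t ∈ Set.Icc (0 : ℝ) x, IsMaxOn g (Set.Icc 0 x) t → t = tstar) ∧
      ∀ L : ℝ, Filter.Tendsto H (nhdsWithin r (Set.Ioi r)) (nhds L) →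
        ((x / (1 - ξ) + r ≤ L → tstar = 0) ∧
         (L < x / (1 - ξ) + r →
           0 < tstar ∧ x / (1 - ξ) + r = H (tstar / (1 - ξ) + r))) :=
  optimal_virtualized_bid_generalized_pareto_general μ σ ξ hμ hμσ hξneg hξge K hK F hFmid r hr H hH
    x hxr hxtop g hg
end
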